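/- arXiv:1206.1366 — 2 statements merged into one kernel-verified Lean document; each statement's English description precedes it below -/
import Mathlib

section
/- Let 𝔄 be a semisimple Banach algebra over ℂ, i.e., a Banach algebra whose Jacobson radical is zero. Then any two complete submultiplicative norms on the underlying algebra of 𝔄 are equivalent; equivalently, any norm turning the algebra 𝔄 into a Banach algebra is equivalent to the given norm. -/
/-- A (not a priori complete) submultiplicative algebra norm on a complex algebra `A`. -/
structure AlgebraNormOn (A : Type*) [Ring A] [Algebra ℂ A] where
  toFun : A → ℝ
  nonneg' : ∀ a, 0 ≤ toFun a
  eq_zero_iff' : ∀ a, toFun a = 0 ↔ a = 0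
  add_le' : ∀ a b, toFun (a + b) ≤ toFun a + toFun b
  smul_eq' : ∀ (c : ℂ) (a : A), toFun (c • a) = ‖c‖ * toFun a
  mul_le' : ∀ a b, toFun (a * b) ≤ toFun a * toFun b

/-- Completeness of an algebra norm: every Cauchy sequence for the norm converges
with respect to the norm. -/
def AlgebraNormOn.IsComplete {A : Type*} [Ring A] [Algebra ℂ A]
    (n : AlgebraNormOn A) : Prop :=
  ∀ u : ℕ → A, (∀ ε : ℝ, 0 < ε → ∃ N, ∀ m ≥ N, ∀ k ≥ N, n.toFun (u m - u k) < ε) →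
    ∃ a : A, Filter.Tendsto (fun m => n.toFun (u m - a)) Filter.atTop (nhds 0)

/-!
By the closed graph theorem, a surjective homomorphism `φ` of complex Banach algebras is
continuous as soon as its separating space `{t | ∃ u → 0, φ u → t}` is zero; this space is a
left ideal, so when the target is semisimple it is enough that each of its elements `t` has
spectral radius zero (then `1 - c t` is invertible for every `c`).

Write `t = φ v` and `x = φ uᵢ` with `uᵢ → 0`. Along the complex line `F z = x + z (t - x)` the
spectral radius is at most `‖uᵢ‖ + |z| (‖v‖ + 1)`, hence small on a small circle `|z| = s²`,
while `‖F z‖` stays bounded, by `K` say, on the large circle `|z| = s⁻²`. Gelfand's formula and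
compactness of the inner circle give one power `N` with `‖F(z)ᴺ‖ ≤ (s² K)ᴺ` there, and
Hadamard's three circles argument for `Fᴺ` at `z = 1` yields `ρ(t) ≤ s K`. Letting `s → 0`
gives `ρ(t) = 0` (this is Ransford's proof of Johnson's theorem).

Applied to the identity map in both directions between `A` with its two complete norms, this
gives the equivalence of the norms.
-/

open Filter Metric Set Topology
open scoped ENNReal NNReal

lemma norm_pow_mul_le_of_norm_pow_le {B : Type*} [NormedRing B] {a : B} {c : ℝ} {n q : ℕ}
    (h : ‖a ^ n‖ ≤ c ^ n) (hq : q ≠ 0) : ‖a ^ (n * q)‖ ≤ c ^ (n * q) := by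
  rw [pow_mul, pow_mul]
  exact (norm_pow_le' _ (Nat.pos_of_ne_zero hq)).trans
    (pow_le_pow_left₀ (norm_nonneg _) h q)

theorem norm_le_mul_norm_pow_of_annulus_boundary {E : Type*} [NormedAddCommGroup E]
    [NormedSpace ℂ E] {f : ℂ → E} {r R C : ℝ} (m : ℕ) (hr : 0 < r)
    (hf : DifferentiableOn ℂ f {z | r ≤ ‖z‖ ∧ ‖z‖ ≤ R})
    (hbd : ∀ z : ℂ, ‖z‖ = r ∨ ‖z‖ = R → ‖f z‖ ≤ C * ‖z‖ ^ m)
    {w : ℂ} (hrw : r < ‖w‖) (hwR : ‖w‖ < R) : ‖f w‖ ≤ C * ‖w‖ ^ m := by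
  set U : Set ℂ := {z | r < ‖z‖ ∧ ‖z‖ < R}
  have hU : IsOpen U :=
    (isOpen_lt continuous_const continuous_norm).inter (isOpen_lt continuous_norm continuous_const)
  have hclU : closure U ⊆ {z | r ≤ ‖z‖ ∧ ‖z‖ ≤ R} :=
    (closure_inter_subset_inter_closure _ _).trans <| inter_subset_inter
      (closure_lt_subset_le continuous_const continuous_norm)
      (closure_lt_subset_le continuous_norm continuous_const)
  have hne : ∀ z ∈ closure U, z ≠ 0 := fun z hz h0 => by
    have := (hclU hz).1
    simp only [h0, norm_zero] at this
    linarith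
  have hdiv : ∀ z ∈ closure U, ‖(z ^ m)⁻¹ • f z‖ ≤ C ↔ ‖f z‖ ≤ C * ‖z‖ ^ m := by
    intro z hz
    rw [norm_smul, norm_inv, norm_pow, inv_mul_le_iff₀ (pow_pos (norm_pos_iff.2 (hne z hz)) m),
      mul_comm]
  have hV : DiffContOnCl ℂ (fun z => (z ^ m)⁻¹ • f z) U := by
    refine DifferentiableOn.diffContOnCl fun z hz => ?_
    exact ((differentiableAt_inv (pow_ne_zero m (hne z hz))).comp z
      (differentiableAt_pow m)).differentiableWithinAt.smul (hf.mono hclU z hz)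
  have hfr : ∀ z ∈ frontier U, ‖(z ^ m)⁻¹ • f z‖ ≤ C := by
    intro z hz
    rw [hU.frontier_eq] at hz
    obtain ⟨hrz, hzR⟩ := hclU hz.1
    refine (hdiv z hz.1).2 (hbd z ?_)
    by_contra! h
    exact hz.2 ⟨hrz.lt_of_ne' h.1, hzR.lt_of_ne h.2⟩
  have hUb : Bornology.IsBounded U := isBounded_ball.subset fun z hz => mem_ball_zero_iff.2 hz.2
  exact (hdiv w (subset_closure ⟨hrw, hwR⟩)).1 <|
    Complex.norm_le_of_forall_mem_frontier_norm_le hUb hV hfr (subset_closure ⟨hrw, hwR⟩)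

section SpectralRadius

variable {B : Type*} [NormedRing B] [NormedAlgebra ℂ B] [CompleteSpace B]

-- Unlike `spectrum.spectralRadius_le_nnnorm`, this does not need `NormOneClass B`.
lemma spectralRadius_le_ofReal_norm (a : B) : spectralRadius ℂ a ≤ ENNReal.ofReal ‖a‖ := by
  rw [← coe_nnnorm, ENNReal.ofReal_coe_nnreal]
  refine le_of_tendsto (spectrum.pow_nnnorm_pow_one_div_tendsto_nhds_spectralRadius a)
    (eventually_atTop.2 ⟨1, fun j hj => ?_⟩)
  have hj0 : j ≠ 0 := by omega
  calc (‖a ^ j‖₊ : ℝ≥0∞) ^ (1 / j : ℝ)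
      _ ≤ ((‖a‖₊ : ℝ≥0∞) ^ j) ^ (j⁻¹ : ℝ) := by
        rw [one_div]
        gcongr
        exact_mod_cast nnnorm_pow_le' a hj
      _ = ‖a‖₊ := ENNReal.pow_rpow_inv_natCast hj0 _

lemma spectralRadius_le_of_norm_pow_le {a : B} {c : ℝ} {n : ℕ} (hn : n ≠ 0) (hc : 0 ≤ c)
    (h : ‖a ^ n‖ ≤ c ^ n) : spectralRadius ℂ a ≤ ENNReal.ofReal c := by
  rw [← ENNReal.pow_le_pow_left_iff hn, ← ENNReal.ofReal_pow hc]
  calc spectralRadius ℂ a ^ n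
      _ ≤ spectralRadius ℂ (a ^ n) := spectrum.spectralRadius_pow_le a n hn
      _ ≤ ENNReal.ofReal ‖a ^ n‖ := spectralRadius_le_ofReal_norm _
      _ ≤ ENNReal.ofReal (c ^ n) := ENNReal.ofReal_le_ofReal h

lemma exists_norm_pow_lt_of_spectralRadius_lt {a : B} {c : ℝ}
    (h : spectralRadius ℂ a < ENNReal.ofReal c) : ∃ n ≠ 0, ‖a ^ n‖ < c ^ n := by
  have hgelfand := spectrum.pow_norm_pow_one_div_tendsto_nhds_spectralRadius a
  obtain ⟨n, hlt, hn⟩ := ((hgelfand.eventually (gt_mem_nhds h)).and (eventually_ne_atTop 0)).exists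
  obtain ⟨hlt, hc⟩ := ENNReal.ofReal_lt_ofReal_iff'.1 hlt
  rw [one_div, Real.rpow_inv_lt_iff_of_pos (norm_nonneg _) hc.le (by positivity),
    Real.rpow_natCast] at hlt
  exact ⟨n, hn, hlt⟩

lemma IsCompact.exists_norm_pow_le_of_spectralRadius_lt {K : Set B} (hK : IsCompact K) {c : ℝ}
    (h : ∀ b ∈ K, spectralRadius ℂ b < ENNReal.ofReal c) :
    ∃ N ≠ 0, ∀ b ∈ K, ‖b ^ N‖ ≤ c ^ N := by
  have hcover : K ⊆ ⋃ n : ℕ, {b : B | ‖b ^ (n + 1)‖ < c ^ (n + 1)} := by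
    intro b hb
    obtain ⟨n, hn, hlt⟩ := exists_norm_pow_lt_of_spectralRadius_lt (h b hb)
    obtain ⟨k, rfl⟩ := Nat.exists_eq_succ_of_ne_zero hn
    exact mem_iUnion.2 ⟨k, hlt⟩
  obtain ⟨I, hI⟩ := hK.elim_finite_subcover _
    (fun n => isOpen_lt (by fun_prop) continuous_const) hcover
  have hN : ∏ i ∈ I, (i + 1) ≠ 0 := Finset.prod_ne_zero_iff.2 fun i _ => i.succ_ne_zero
  refine ⟨_, hN, fun b hb => ?_⟩
  obtain ⟨i, hi, hbi⟩ := mem_iUnion₂.1 (hI hb)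
  obtain ⟨q, hq⟩ := Finset.dvd_prod_of_mem (fun i => i + 1) hi
  rw [hq] at hN ⊢
  exact norm_pow_mul_le_of_norm_pow_le hbi.le (right_ne_zero_of_mul hN)

theorem spectralRadius_le_of_affine_approx {t x : B} {M s : ℝ} (hM : 0 ≤ M) (hs₀ : 0 < s)
    (hs₁ : s < 1) (hx : ‖t - x‖ ≤ s ^ 4)
    (hsp : ∀ z : ℂ,
      spectralRadius ℂ (x + z • (t - x)) ≤ ENNReal.ofReal (s ^ 4 + ‖z‖ * M)) :
    spectralRadius ℂ t ≤ ENNReal.ofReal (s * (‖t‖ + M + 4)) := by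
  set K := ‖t‖ + M + 4
  set F : ℂ → B := fun z => x + z • (t - x)
  have hFd : Differentiable ℂ F := (differentiable_const x).add (differentiable_id.smul_const _)
  have hs₂ : s ^ 2 < 1 := pow_lt_one₀ hs₀.le hs₁ two_ne_zero
  have hinner :
      ∀ b ∈ F '' sphere 0 (s ^ 2), spectralRadius ℂ b < ENNReal.ofReal (s ^ 2 * K) := by
    rintro _ ⟨z, hz, rfl⟩
    refine (hsp z).trans_lt ((ENNReal.ofReal_lt_ofReal_iff (by positivity)).2 ?_)
    rw [mem_sphere_zero_iff_norm.1 hz]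
    nlinarith [norm_nonneg t, pow_pos hs₀ 2]
  obtain ⟨n, hn, hnorm⟩ := ((isCompact_sphere 0 (s ^ 2)).image hFd.continuous)
    |>.exists_norm_pow_le_of_spectralRadius_lt hinner
  have houter : ∀ z : ℂ, ‖z‖ = (s ^ 2)⁻¹ → ‖F z‖ ≤ K := fun z hz => by
    have hx' : ‖x‖ ≤ ‖t‖ + s ^ 4 := by
      have := norm_sub_le t (t - x)
      rw [sub_sub_cancel] at this
      linarith
    have hzx : ‖z‖ * ‖t - x‖ ≤ s ^ 2 := by
      calc ‖z‖ * ‖t - x‖ ≤ (s ^ 2)⁻¹ * s ^ 4 := by rw [hz]; gcongr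
        _ = s ^ 2 := by field_simp
    calc ‖F z‖ ≤ ‖x‖ + ‖z‖ * ‖t - x‖ := by grw [norm_add_le, norm_smul]
      _ ≤ K := by nlinarith [pow_pos hs₀ 2]
  have hpow : ‖t ^ (n * 2)‖ ≤ (s * K) ^ (n * 2) := by
    have := norm_le_mul_norm_pow_of_annulus_boundary (f := fun z => F z ^ (n * 2))
      (C := (s * K) ^ (n * 2)) n (pow_pos hs₀ 2) (hFd.pow _).differentiableOn ?_
      (w := 1) (by simpa using hs₂) (by simpa using one_lt_inv₀ (pow_pos hs₀ 2) |>.2 hs₂)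
    · simpa [F] using this
    rintro z (hz | hz)
    · calc ‖F z ^ (n * 2)‖ ≤ (s ^ 2 * K) ^ (n * 2) :=
          norm_pow_mul_le_of_norm_pow_le (hnorm _ (mem_image_of_mem F (by simpa using hz)))
            two_ne_zero
        _ = (s * K) ^ (n * 2) * ‖z‖ ^ n := by
          rw [hz, mul_pow, mul_pow, ← pow_mul, ← pow_mul]; ring
    · calc ‖F z ^ (n * 2)‖ ≤ ‖F z‖ ^ (n * 2) := norm_pow_le' _ (by omega)
        _ ≤ K ^ (n * 2) := pow_le_pow_left₀ (norm_nonneg _) (houter z hz) _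
        _ = (s * K) ^ (n * 2) * ‖z‖ ^ n := by
          rw [hz, mul_pow, inv_pow, ← pow_mul, mul_comm 2 n]; field_simp
  exact spectralRadius_le_of_norm_pow_le (by omega) (by positivity) hpow

theorem spectralRadius_eq_zero_of_forall_affine_approx {t : B} {M : ℝ} (hM : 0 ≤ M)
    (H : ∀ δ > 0, ∃ x : B, ‖t - x‖ ≤ δ ∧
      ∀ z : ℂ, spectralRadius ℂ (x + z • (t - x)) ≤ ENNReal.ofReal (δ + ‖z‖ * M)) :
    spectralRadius ℂ t = 0 := by
  have hlim :
      Tendsto (fun s : ℝ => ENNReal.ofReal (s * (‖t‖ + M + 4))) (𝓝[>] 0) (𝓝 0) := by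
    refine tendsto_nhdsWithin_of_tendsto_nhds ?_
    have hc : Continuous fun s : ℝ => ENNReal.ofReal (s * (‖t‖ + M + 4)) :=
      ENNReal.continuous_ofReal.comp (continuous_mul_const _)
    simpa using hc.tendsto 0
  refine le_antisymm (ge_of_tendsto hlim ?_) zero_le
  filter_upwards [Ioo_mem_nhdsGT zero_lt_one] with s ⟨hs₀, hs₁⟩
  obtain ⟨x, hx, hsp⟩ := H (s ^ 4) (by positivity)
  exact spectralRadius_le_of_affine_approx hM hs₀ hs₁ hx hsp

end SpectralRadius

theorem AlgHom.spectralRadius_apply_le {A B : Type*} [Ring A] [Algebra ℂ A] [Ring B]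
    [Algebra ℂ B] (φ : A →ₐ[ℂ] B) (a : A) :
    spectralRadius ℂ (φ a) ≤ spectralRadius ℂ a :=
  iSup_le_iSup_of_subset (AlgHom.spectrum_apply_subset φ a)

theorem isUnit_one_sub_of_spectralRadius_lt_one {B : Type*} [NormedRing B] [NormedAlgebra ℂ B]
    {b : B} (h : spectralRadius ℂ b < 1) : IsUnit (1 - b) := by
  have := spectrum.mem_resolventSet_of_spectralRadius_lt (k := (1 : ℂ)) (by simpa using h)
  simpa using spectrum.mem_resolventSet_iff.1 this

section SeparatingSpace

variable {A B : Type*} [NormedRing A] [NormedAlgebra ℂ A] [CompleteSpace A]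
  [NormedRing B] [NormedAlgebra ℂ B] [CompleteSpace B]

theorem AlgHom.spectralRadius_eq_zero_of_tendsto (φ : A →ₐ[ℂ] B) {u : ℕ → A} {v : A}
    (hu : Tendsto u atTop (𝓝 0)) (hφu : Tendsto (fun i => φ (u i)) atTop (𝓝 (φ v))) :
    spectralRadius ℂ (φ v) = 0 := by
  refine spectralRadius_eq_zero_of_forall_affine_approx (M := ‖v‖ + 1) (by positivity)
    fun δ hδ => ?_
  have hu' : ∀ᶠ i in atTop, ‖u i‖ ≤ min δ 1 :=
    (tendsto_zero_iff_norm_tendsto_zero.1 hu).eventually_le_const (by positivity)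
  have hφu' : ∀ᶠ i in atTop, ‖φ v - φ (u i)‖ ≤ δ := by
    have := (tendsto_iff_norm_sub_tendsto_zero.1 hφu).eventually_le_const hδ
    simpa only [norm_sub_rev] using this
  obtain ⟨i, hui, hφui⟩ := (hu'.and hφu').exists
  refine ⟨φ (u i), hφui, fun z => ?_⟩
  have hφ : φ (u i) + z • (φ v - φ (u i)) = φ (u i + z • (v - u i)) := by simp
  have hnorm : ‖u i + z • (v - u i)‖ ≤ δ + ‖z‖ * (‖v‖ + 1) := calc
    ‖u i + z • (v - u i)‖ ≤ ‖u i‖ + ‖z‖ * (‖v‖ + ‖u i‖) := by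
      grw [norm_add_le, norm_smul, norm_sub_le]
    _ ≤ δ + ‖z‖ * (‖v‖ + 1) := by
      gcongr
      exacts [hui.trans (min_le_left _ _), hui.trans (min_le_right _ _)]
  rw [hφ]
  exact (φ.spectralRadius_apply_le _).trans <|
    (spectralRadius_le_ofReal_norm _).trans (ENNReal.ofReal_le_ofReal hnorm)

theorem AlgHom.continuous_of_surjective_of_semisimple (φ : A →ₐ[ℂ] B) (hφ : Function.Surjective φ)
    (hB : ∀ b : B, (∀ c : B, IsUnit (1 - c * b)) → b = 0) : Continuous φ := by
  refine φ.toLinearMap.continuous_of_seq_closed_graph fun u a t hu hφu => ?_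
  obtain ⟨v, hv⟩ := hφ (t - φ a)
  change t = φ a
  refine sub_eq_zero.1 (hB _ fun c => ?_)
  obtain ⟨b, rfl⟩ := hφ c
  refine isUnit_one_sub_of_spectralRadius_lt_one ?_
  rw [← hv, ← map_mul, φ.spectralRadius_eq_zero_of_tendsto (u := fun i => b * (u i - a))]
  · exact zero_lt_one
  · simpa using (tendsto_sub_nhds_zero_iff.2 hu).const_mul b
  · simpa [hv] using ((hφu.sub_const (φ a)).const_mul (φ b))

end SeparatingSpace

section WithAlgebraNorm

variable {A : Type*} [Ring A] [Algebra ℂ A] (n : AlgebraNormOn A)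

def AlgebraNormOn.toRingNorm : RingNorm A where
  toFun := n.toFun
  map_zero' := (n.eq_zero_iff' 0).2 rfl
  add_le' := n.add_le'
  neg' a := by simpa using n.smul_eq' (-1) a
  mul_le' := n.mul_le'
  eq_zero_of_map_eq_zero' a := (n.eq_zero_iff' a).1

def WithAlgebraNorm (_ : AlgebraNormOn A) : Type _ := A

noncomputable instance : NormedRing (WithAlgebraNorm n) := n.toRingNorm.toNormedRing (R := A)

instance : Algebra ℂ (WithAlgebraNorm n) := inferInstanceAs (Algebra ℂ A)

instance : NormedAlgebra ℂ (WithAlgebraNorm n) where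
  toAlgebra := inferInstance
  norm_smul_le c a := (n.smul_eq' c a).le

def WithAlgebraNorm.algEquiv : A ≃ₐ[ℂ] WithAlgebraNorm n := AlgEquiv.refl

theorem WithAlgebraNorm.completeSpace (hn : n.IsComplete) :
    CompleteSpace (WithAlgebraNorm n) := by
  refine Metric.complete_of_cauchySeq_tendsto fun u hu => ?_
  obtain ⟨a, ha⟩ := hn u fun ε hε => (Metric.cauchySeq_iff.1 hu ε hε).imp
    fun N hN m hm k hk => by
      have := hN m hm k hk
      rwa [dist_eq_norm] at this
  exact ⟨a, tendsto_iff_norm_sub_tendsto_zero.2 ha⟩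

end WithAlgebraNorm

/-- **Johnson's uniqueness-of-norm theorem.** Let `A` be a semisimple Banach algebra over
`ℂ` (its Jacobson radical is zero, expressed here by the quasi-regularity criterion:
any `a` with `1 - b * a` invertible for all `b` is zero).  Then every complete
submultiplicative algebra norm on `A` is equivalent to the given norm; i.e. any norm
turning the algebra `A` into a Banach algebra is equivalent to the given one. -/
theorem johnson_uniqueness_of_norm (A : Type*) [NormedRing A] [NormedAlgebra ℂ A]
    [CompleteSpace A]
    (hsemisimple : ∀ a : A, (∀ b : A, IsUnit (1 - b * a)) → a = 0)
    (n : AlgebraNormOn A) (hn : n.IsComplete) :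
    ∃ C D : ℝ, 0 < C ∧ 0 < D ∧
      ∀ a : A, n.toFun a ≤ C * ‖a‖ ∧ ‖a‖ ≤ D * n.toFun a := by
  have := WithAlgebraNorm.completeSpace n hn
  let e := WithAlgebraNorm.algEquiv n
  obtain ⟨C, hC, hCe⟩ := SemilinearMapClass.bound_of_continuous e
    (e.toAlgHom.continuous_of_surjective_of_semisimple e.surjective hsemisimple)
  obtain ⟨D, hD, hDe⟩ := SemilinearMapClass.bound_of_continuous e.symm
    (e.symm.toAlgHom.continuous_of_surjective_of_semisimple e.symm.surjective hsemisimple)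
  exact ⟨C, D, hC, hD, fun a => ⟨hCe a, hDe (e a)⟩⟩
end

section
/- The free group F₂ on two generators (as a discrete group) is not amenable: there is no left invariant mean on ℓ^∞(F₂). -/
/-- A left invariant mean on `ℓ^∞(G)` for a discrete group `G`: a continuous linear
functional `M` with `‖M‖ = 1 = M(1)` such that `M(L_x φ) = M(φ)` for all `x ∈ G` and
`φ ∈ ℓ^∞(G)`, where `(L_x φ)(y) = φ(x⁻¹ y)`. -/
def IsDiscreteLeftInvariantMean (G : Type*) [Group G]
    (M : lp (fun _ : G => ℂ) ⊤ →L[ℂ] ℂ) : Prop :=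
  ‖M‖ = 1 ∧ M 1 = 1 ∧
  ∀ (x : G) (φ ψ : lp (fun _ : G => ℂ) ⊤),
    (∀ y : G, ψ y = φ (x⁻¹ * y)) → M ψ = M φ

/-!
A left invariant mean `M` on `ℓ^∞(F₂)` induces a finitely additive, left invariant probability
measure `μ A = Re M(1_A)`; positivity comes from `‖1_{Aᶜ} - 1_A‖ ≤ 1` together with `‖M‖ = 1`
and `M 1 = 1`. For a letter `w`, every reduced word not starting with `w` is `w` times a reduced
word starting with `w⁻¹`, so `μ(S w) + μ(S w⁻¹) ≥ 1`, where `S w` is the set of reduced words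
starting with `w`. Adding this for both generators, the four pairwise disjoint sets `S w` would
have total measure at least `2`.
-/

open scoped ENNReal Pointwise

noncomputable section

section Indicator

variable {α : Type*}

def indicatorLp (A : Set α) : lp (fun _ : α => ℂ) ∞ :=
  ⟨A.indicator 1, memℓp_infty ⟨1, by
    rintro _ ⟨y, rfl⟩
    by_cases hy : y ∈ A <;> simp [hy]⟩⟩

@[simp]
theorem coe_indicatorLp (A : Set α) : ⇑(indicatorLp A) = A.indicator 1 := rfl

theorem indicatorLp_union {A B : Set α} (h : Disjoint A B) :
    indicatorLp (A ∪ B) = indicatorLp A + indicatorLp B :=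
  lp.ext <| Set.indicator_union_of_disjoint h 1

theorem indicatorLp_compl (A : Set α) : indicatorLp Aᶜ = 1 - indicatorLp A :=
  lp.ext <| by rw [coe_indicatorLp, Set.indicator_compl, lp.coeFn_sub, lp.infty_coeFn_one]; rfl

theorem norm_indicatorLp_compl_sub_le (A : Set α) : ‖indicatorLp Aᶜ - indicatorLp A‖ ≤ 1 :=
  lp.norm_le_of_forall_le zero_le_one fun y => by
    rw [lp.coeFn_sub, Pi.sub_apply, coe_indicatorLp, coe_indicatorLp]
    by_cases hy : y ∈ A <;> simp [hy]

end Indicator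

section MeanMeasure

variable {α : Type*} (M : lp (fun _ : α => ℂ) ∞ →L[ℂ] ℂ)

def meanMeasure (A : Set α) : ℝ := (M (indicatorLp A)).re

theorem meanMeasure_union {A B : Set α} (h : Disjoint A B) :
    meanMeasure M (A ∪ B) = meanMeasure M A + meanMeasure M B := by
  rw [meanMeasure, indicatorLp_union h, map_add, Complex.add_re, meanMeasure, meanMeasure]

variable {M}

theorem meanMeasure_compl (hone : M 1 = 1) (A : Set α) :
    meanMeasure M Aᶜ = 1 - meanMeasure M A := by
  rw [meanMeasure, indicatorLp_compl, map_sub, hone, Complex.sub_re, Complex.one_re, meanMeasure]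

theorem meanMeasure_mem_Icc (hnorm : ‖M‖ ≤ 1) (hone : M 1 = 1) (A : Set α) :
    meanMeasure M A ∈ Set.Icc 0 1 := by
  have hbound : |meanMeasure M Aᶜ - meanMeasure M A| ≤ 1 :=
    calc |meanMeasure M Aᶜ - meanMeasure M A|
        _ = |(M (indicatorLp Aᶜ - indicatorLp A)).re| := by rw [map_sub, Complex.sub_re]; rfl
        _ ≤ ‖M (indicatorLp Aᶜ - indicatorLp A)‖ := Complex.abs_re_le_norm _
        _ ≤ ‖M‖ * ‖indicatorLp Aᶜ - indicatorLp A‖ := M.le_opNorm _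
        _ ≤ 1 * 1 := by gcongr; exact norm_indicatorLp_compl_sub_le A
        _ = 1 := one_mul 1
  rw [meanMeasure_compl hone, abs_le] at hbound
  constructor <;> linarith [hbound.1, hbound.2]

theorem meanMeasure_mono (hnorm : ‖M‖ ≤ 1) (hone : M 1 = 1) {A B : Set α} (h : A ⊆ B) :
    meanMeasure M A ≤ meanMeasure M B := by
  rw [← Set.union_sdiff_cancel h, meanMeasure_union M Set.disjoint_sdiff_right]
  linarith [(meanMeasure_mem_Icc hnorm hone (B \ A)).1]

end MeanMeasure

theorem IsDiscreteLeftInvariantMean.meanMeasure_smul {G : Type*} [Group G]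
    {M : lp (fun _ : G => ℂ) ∞ →L[ℂ] ℂ} (hM : IsDiscreteLeftInvariantMean G M)
    (x : G) (A : Set G) : meanMeasure M (x • A) = meanMeasure M A :=
  congrArg Complex.re <| hM.2.2 x _ _ fun y => by
    simp only [coe_indicatorLp]
    by_cases hy : x⁻¹ * y ∈ A <;> simp [Set.mem_smul_set_iff_inv_smul_mem, hy]

namespace FreeGroup

variable {α : Type*} [DecidableEq α]

theorem compl_startsWith_subset_mk_smul (w : α × Bool) :
    (startsWith w)ᶜ ⊆ mk [w] • startsWith (w.1, !w.2) := fun g hg => by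
  rw [Set.mem_smul_set_iff_inv_smul_mem, smul_eq_mul, inv_mk]
  exact startsWith_mk_mul g (by simpa using hg)

theorem one_le_meanMeasure_startsWith_add {M : lp (fun _ : FreeGroup α => ℂ) ∞ →L[ℂ] ℂ}
    (hM : IsDiscreteLeftInvariantMean (FreeGroup α) M) (w : α × Bool) :
    1 ≤ meanMeasure M (startsWith w) + meanMeasure M (startsWith (w.1, !w.2)) := by
  have := calc 1 - meanMeasure M (startsWith w)
      _ = meanMeasure M (startsWith w)ᶜ := (meanMeasure_compl hM.2.1 _).symm
      _ ≤ meanMeasure M (mk [w] • startsWith (w.1, !w.2)) :=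
        meanMeasure_mono hM.1.le hM.2.1 (compl_startsWith_subset_mk_smul w)
      _ = meanMeasure M (startsWith (w.1, !w.2)) := hM.meanMeasure_smul _ _
  linarith

theorem not_isDiscreteLeftInvariantMean {a b : α} (hab : a ≠ b)
    (M : lp (fun _ : FreeGroup α => ℂ) ∞ →L[ℂ] ℂ) :
    ¬ IsDiscreteLeftInvariantMean (FreeGroup α) M := by
  intro hM
  have hdisj : Disjoint (startsWith (a, true) ∪ startsWith (a, false))
      (startsWith (b, true) ∪ startsWith (b, false)) := by
    simp [Set.disjoint_union_left, Set.disjoint_union_right, hab]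
  have hdisj_a : Disjoint (startsWith (a, true)) (startsWith (a, false)) := by simp
  have hdisj_b : Disjoint (startsWith (b, true)) (startsWith (b, false)) := by simp
  have htotal := (meanMeasure_mem_Icc hM.1.le hM.2.1
    (startsWith (a, true) ∪ startsWith (a, false) ∪ (startsWith (b, true) ∪ startsWith (b, false)))).2
  rw [meanMeasure_union M hdisj, meanMeasure_union M hdisj_a, meanMeasure_union M hdisj_b] at htotal
  have ha := one_le_meanMeasure_startsWith_add hM (a, true)
  have hb := one_le_meanMeasure_startsWith_add hM (b, true)
  simp only [Bool.not_true] at ha hb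
  linarith

end FreeGroup

end

/-- The free group on two generators is not amenable: there is no left invariant mean
on `ℓ^∞(F₂)`. -/
theorem freeGroup_two_not_amenable :
    ¬ ∃ M : lp (fun _ : FreeGroup (Fin 2) => ℂ) ⊤ →L[ℂ] ℂ,
      IsDiscreteLeftInvariantMean (FreeGroup (Fin 2)) M :=
  fun ⟨M, hM⟩ => FreeGroup.not_isDiscreteLeftInvariantMean (by decide : (0 : Fin 2) ≠ 1) M hM
end
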